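/- Let g be the free 2-step nilpotent Lie algebra on m = 2s+1 generators and ℓ ∈ g* such that every leading principal 2k × 2k submatrix M_{2k} (k = 1,…,s) of the skew-symmetric matrix A with A_{ij}=ℓ[Z_i,Z_j] is invertible. Then the subspace p(ℓ) = z(g) + ℝZ_1 + Σ_{k=1}^{s} ℝ(Z_{2k+1} − μ_{2k}(M_{2k}^{-1} v_{2k+1})) satisfies ℓ([p(ℓ),p(ℓ)]) = 0, where v_{2k+1} = (ℓ[Z_1,Z_{2k+1}],…,ℓ[Z_{2k},Z_{2k+1}])ᵀ and μ_{2k} embeds ℝ^{2k} into g via the basis Z_1,…,Z_{2k}. -/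

import Mathlib

/-!
With `w_k = Z_{2k+1} - μ_{2k}(M_{2k}⁻¹ v_{2k+1})`, the correction term is exactly what makes
`B_ℓ(Z_i, w_k) = 0` for `i ≤ 2k`, while `w_k` lies in the span of `Z_1, …, Z_{2k+1}`. Hence
`Z_1, w_1, …, w_s` is a triangular, and by skew-symmetry pairwise orthogonal, family for `B_ℓ`;
isotropy passes to its span, and adding the centre changes no bracket.
-/

/-- Model of the free 2-step nilpotent Lie algebra on `m` generators: the first factor
records coordinates with respect to the generators `Z_1, …, Z_m`, the second factor records
coordinates with respect to the central basis vectors `Z_{ij} = [Z_i, Z_j]` for `i < j`. -/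
def FN (m : ℕ) : Type :=
  (Fin m → ℝ) × ({p : Fin m × Fin m // p.1 < p.2} → ℝ)

namespace FN

variable {m : ℕ}

instance : AddCommGroup (FN m) := by unfold FN; infer_instance
noncomputable instance : Module ℝ (FN m) := by unfold FN; infer_instance

noncomputable instance : LieRing (FN m) where
  bracket x y := (0, fun p => x.1 p.1.1 * y.1 p.1.2 - x.1 p.1.2 * y.1 p.1.1)
  add_lie x y z := by
    refine Prod.ext ?_ (funext fun p => ?_)
    · change (0 : Fin m → ℝ) = 0 + 0; simp
    · change (x.1 + y.1) p.1.1 * z.1 p.1.2 - (x.1 + y.1) p.1.2 * z.1 p.1.1 =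
        (x.1 p.1.1 * z.1 p.1.2 - x.1 p.1.2 * z.1 p.1.1) + (y.1 p.1.1 * z.1 p.1.2 - y.1 p.1.2 * z.1 p.1.1)
      change ((x.1 + y.1) p.1.1) * _ - ((x.1 + y.1) p.1.2) * _ = _
      simp [Pi.add_apply]; ring
  lie_add x y z := by
    refine Prod.ext ?_ (funext fun p => ?_)
    · change (0 : Fin m → ℝ) = 0 + 0; simp
    · change x.1 p.1.1 * (y.1 + z.1) p.1.2 - x.1 p.1.2 * (y.1 + z.1) p.1.1 =
        (x.1 p.1.1 * y.1 p.1.2 - x.1 p.1.2 * y.1 p.1.1) + (x.1 p.1.1 * z.1 p.1.2 - x.1 p.1.2 * z.1 p.1.1)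
      change _ * ((y.1 + z.1) p.1.2) - _ * ((y.1 + z.1) p.1.1) = _
      simp [Pi.add_apply]; ring
  lie_self x := by
    refine Prod.ext rfl (funext fun p => ?_)
    change _ * _ - _ * _ = (0 : ℝ)
    ring
  leibniz_lie x y z := by
    refine Prod.ext ?_ (funext fun p => ?_)
    · change (0 : Fin m → ℝ) = 0 + 0; simp
    · change x.1 p.1.1 * 0 - x.1 p.1.2 * 0 =
        (0 * z.1 p.1.2 - 0 * z.1 p.1.1) + (y.1 p.1.1 * 0 - y.1 p.1.2 * 0)
      ring

noncomputable instance : LieAlgebra ℝ (FN m) where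
  lie_smul t x y := by
    refine Prod.ext ?_ (funext fun p => ?_)
    · change (0 : Fin m → ℝ) = t • 0; simp
    · change _ * ((t • y.1) p.1.2) - _ * ((t • y.1) p.1.1) = t • (_ - _)
      simp [Pi.smul_apply, smul_eq_mul]; ring

/-- The generators `Z_1, …, Z_m`. -/
noncomputable def Z (i : Fin m) : FN m := (Pi.single i 1, 0)

/-- The embedding `μ_k : ℝ^k → FN m` sending `x` to `Σ x_i Z_i`. -/
noncomputable def mu (k : ℕ) (h : k ≤ m) (x : Fin k → ℝ) : FN m :=
  ∑ i : Fin k, x i • Z (Fin.castLE h i)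

end FN

section Isotropic

open Matrix

variable {R L : Type*} [CommRing R] [LieRing L] [LieAlgebra R L]

/-- `S` is isotropic for the form `B_ℓ(X, Y) = ℓ ⁅X, Y⁆`. -/
def LieIsotropic (ℓ : L →ₗ[R] R) (S : Set L) : Prop :=
  ∀ x ∈ S, ∀ y ∈ S, ℓ ⁅x, y⁆ = 0

variable (ℓ : L →ₗ[R] R)

theorem apply_lie_eq_zero_of_mem_span {S : Set L} {x y : L} (hS : ∀ a ∈ S, ℓ ⁅a, y⁆ = 0)
    (hx : x ∈ Submodule.span R S) : ℓ ⁅x, y⁆ = 0 := by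
  induction hx using Submodule.span_induction with
  | mem a ha => exact hS a ha
  | zero => simp
  | add a b _ _ ha hb => simp [add_lie, ha, hb]
  | smul t a _ ha => simp [smul_lie, ha]

theorem LieIsotropic.span {S : Set L} (hS : LieIsotropic ℓ S) :
    LieIsotropic ℓ (Submodule.span R S) := by
  intro x hx y hy
  refine apply_lie_eq_zero_of_mem_span ℓ (fun a ha => ?_) hx
  rw [← lie_skew, map_neg, apply_lie_eq_zero_of_mem_span ℓ (hS · · a ha) hy, neg_zero]

theorem LieIsotropic.center_sup {q : Submodule R L} (hq : LieIsotropic ℓ q) :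
    LieIsotropic ℓ ((LieAlgebra.center R L).toSubmodule ⊔ q : Submodule R L) := by
  intro X hX Y hY
  obtain ⟨c, hc, x, hx, rfl⟩ := Submodule.mem_sup.mp hX
  obtain ⟨d, hd, y, hy, rfl⟩ := Submodule.mem_sup.mp hY
  have hc' : ∀ z : L, ⁅c, z⁆ = 0 := fun z => by
    rw [← lie_skew, (LieModule.mem_maxTrivSubmodule R L L c).mp hc z, neg_zero]
  have hd' := (LieModule.mem_maxTrivSubmodule R L L d).mp hd
  simpa [add_lie, lie_add, hc', hd'] using hq x hx y hy

theorem lieIsotropic_range_of_lt {ι : Type*} [LinearOrder ι] {u : ι → L}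
    (h : ∀ a b, a < b → ℓ ⁅u a, u b⁆ = 0) : LieIsotropic ℓ (Set.range u) := by
  rintro _ ⟨a, rfl⟩ _ ⟨b, rfl⟩
  rcases lt_trichotomy a b with hab | rfl | hab
  · exact h a b hab
  · simp
  · rw [← lie_skew, map_neg, h b a hab, neg_zero]

theorem apply_lie_sub_sum_inv_mulVec_eq_zero {n : ℕ} (e : Fin n → L) (y : L)
    (M : Matrix (Fin n) (Fin n) R) (hM : ∀ i j, M i j = ℓ ⁅e i, e j⁆) (hdet : IsUnit M.det)
    (v : Fin n → R) (hv : ∀ i, v i = ℓ ⁅e i, y⁆) (i : Fin n) :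
    ℓ ⁅e i, y - ∑ j, (M⁻¹ *ᵥ v) j • e j⁆ = 0 := by
  have hsum : ℓ ⁅e i, ∑ j, (M⁻¹ *ᵥ v) j • e j⁆ = (M *ᵥ (M⁻¹ *ᵥ v)) i := by
    simp [lie_sum, mulVec, dotProduct, hM, mul_comm]
  rw [lie_sub, map_sub, hsum, mulVec_mulVec, mul_nonsing_inv _ hdet, one_mulVec, hv, sub_self]

end Isotropic

namespace FN

open Matrix

variable {m : ℕ}

theorem apply_lie_Z_sub_mu_eq_zero (ℓ : FN m →ₗ[ℝ] ℝ) {n : ℕ} (hn : n < m)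
    (M : Matrix (Fin n) (Fin n) ℝ)
    (hM : ∀ i j, M i j = ℓ ⁅Z (Fin.castLE hn.le i), Z (Fin.castLE hn.le j)⁆)
    (hdet : M.det ≠ 0) (v : Fin n → ℝ) (hv : ∀ i, v i = ℓ ⁅Z (Fin.castLE hn.le i), Z ⟨n, hn⟩⁆)
    {i : Fin m} (hi : (i : ℕ) < n) :
    ℓ ⁅Z i, Z ⟨n, hn⟩ - mu n hn.le (M⁻¹ *ᵥ v)⁆ = 0 :=
  apply_lie_sub_sum_inv_mulVec_eq_zero ℓ (fun j => Z (Fin.castLE hn.le j)) _ M hM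
    (isUnit_iff_ne_zero.mpr hdet) v hv ⟨i, hi⟩

theorem Z_sub_mu_mem_span {n : ℕ} (hn : n < m) (x : Fin n → ℝ) :
    Z ⟨n, hn⟩ - mu n hn.le x ∈ Submodule.span ℝ (Z '' {i : Fin m | (i : ℕ) ≤ n}) := by
  refine Submodule.sub_mem _ (Submodule.subset_span ⟨_, le_refl n, rfl⟩)
    (Submodule.sum_mem _ fun j _ => Submodule.smul_mem _ _ (Submodule.subset_span ⟨_, ?_, rfl⟩))
  exact j.isLt.le

/-- Let `g` be the free 2-step nilpotent Lie algebra on `m = 2s+1` generators and `ℓ ∈ g*`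
such that every leading principal `2k × 2k` submatrix `M_{2k}` of the skew-symmetric matrix
`A`, `A i j = ℓ[Z_i, Z_j]`, is invertible (`k = 1, …, s`).  Then the subspace
`p(ℓ) = z(g) + ℝZ_1 + Σ_{k=1}^s ℝ(Z_{2k+1} − μ_{2k}(M_{2k}⁻¹ v_{2k+1}))` satisfies
`ℓ([p(ℓ), p(ℓ)]) = 0`, where `v_{2k+1} = (ℓ[Z_1,Z_{2k+1}], …, ℓ[Z_{2k},Z_{2k+1}])ᵀ` and
`μ_{2k}` embeds `ℝ^{2k}` into `g` via the basis `Z_1, …, Z_{2k}`. -/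
theorem stmt14 (s : ℕ) (ℓ : FN (2 * s + 1) →ₗ[ℝ] ℝ)
    (A : Matrix (Fin (2 * s + 1)) (Fin (2 * s + 1)) ℝ)
    (hA : ∀ i j : Fin (2 * s + 1), A i j = ℓ ⁅Z i, Z j⁆)
    (M : ∀ k : Fin s, Matrix (Fin (2 * ((k : ℕ) + 1))) (Fin (2 * ((k : ℕ) + 1))) ℝ)
    (hM : ∀ (k : Fin s) (i j : Fin (2 * ((k : ℕ) + 1))),
      M k i j = A (Fin.castLE (by omega) i) (Fin.castLE (by omega) j))
    (hinv : ∀ k : Fin s, (M k).det ≠ 0)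
    (v : ∀ k : Fin s, Fin (2 * ((k : ℕ) + 1)) → ℝ)
    (hv : ∀ (k : Fin s) (i : Fin (2 * ((k : ℕ) + 1))),
      v k i = ℓ ⁅Z (Fin.castLE (n := 2 * ((k : ℕ) + 1)) (m := 2 * s + 1) (by omega) i), Z ⟨2 * ((k : ℕ) + 1), by omega⟩⁆)
    (w : Fin s → FN (2 * s + 1))
    (hw : ∀ k : Fin s, w k = Z ⟨2 * ((k : ℕ) + 1), by omega⟩ -
      mu (2 * ((k : ℕ) + 1)) (by omega) ((M k)⁻¹.mulVec (v k)))
    (p : Submodule ℝ (FN (2 * s + 1)))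
    (hp : p = (LieAlgebra.center ℝ (FN (2 * s + 1))).toSubmodule ⊔
      Submodule.span ℝ ({Z 0} ∪ Set.range w)) :
    ∀ X ∈ p, ∀ Y ∈ p, ℓ ⁅X, Y⁆ = 0 := by
  subst hp
  have hw_perp : ∀ (k : Fin s) (i : Fin (2 * s + 1)), (i : ℕ) < 2 * ((k : ℕ) + 1) →
      ℓ ⁅Z i, w k⁆ = 0 :=
    fun k i hi => hw k ▸ apply_lie_Z_sub_mu_eq_zero ℓ _ (M k)
      (fun i j => (hM k i j).trans (hA _ _)) (hinv k) (v k) (hv k) hi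
  have hw_span : ∀ k : Fin s,
      w k ∈ Submodule.span ℝ (Z '' {i : Fin (2 * s + 1) | (i : ℕ) ≤ 2 * ((k : ℕ) + 1)}) :=
    fun k => hw k ▸ Z_sub_mu_mem_span _ _
  have htri : ∀ a b : Fin (s + 1), a < b →
      ℓ ⁅vecCons (Z 0) w a, vecCons (Z 0) w b⁆ = 0 := by
    intro a b hab
    obtain ⟨j, rfl⟩ := Fin.exists_succ_eq.mpr (Fin.ne_zero_of_lt hab)
    induction a using Fin.cases with
    | zero => exact hw_perp j 0 (by simp)
    | succ k =>
      refine apply_lie_eq_zero_of_mem_span ℓ ?_ (hw_span k)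
      rintro _ ⟨i, hi, rfl⟩
      exact hw_perp j i (by
        simp only [Set.mem_ofPred_eq, Fin.lt_def, Fin.val_succ] at hi hab; omega)
  rw [← range_cons]
  exact ((lieIsotropic_range_of_lt ℓ htri).span ℓ).center_sup ℓ

end FN
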